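/- The subspace of Iuₙ spanned by {x_{ij} : i ≠ j} ∪ {b_i : 1 ≤ i ≤ n} is a nilpotent Lie subalgebra of Iuₙ; in particular, the derived subalgebra [Iuₙ, Iuₙ] is a nilpotent Lie algebra. -/

import Mathlib

/-- Index set for the basis of `Iuₙ`: the off-diagonal pairs indexing the `x_{ij}` (`i ≠ j`),
then the `a_i`'s, then the `b_i`'s. -/
abbrev IuIdx (n : ℕ) : Type := { p : Fin n × Fin n // p.1 ≠ p.2 } ⊕ (Fin n ⊕ Fin n)

/-- `Iuₙ`: the free `K`-vector space on the basis `{x_{ij} : i ≠ j} ∪ {a_i} ∪ {b_i}`. -/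
abbrev Iu (n : ℕ) (K : Type*) [Field K] : Type _ := IuIdx n →₀ K

variable (n : ℕ) (K : Type*) [Field K]

/-- The basis element `x_{ij}` (`i ≠ j`). -/
noncomputable def xE (i j : Fin n) (h : i ≠ j) : Iu n K :=
  Finsupp.single (Sum.inl ⟨(i, j), h⟩) 1

/-- The basis element `a_i`. -/
noncomputable def aE (i : Fin n) : Iu n K := Finsupp.single (Sum.inr (Sum.inl i)) 1

/-- The basis element `b_i`. -/
noncomputable def bE (i : Fin n) : Iu n K := Finsupp.single (Sum.inr (Sum.inr i)) 1

/-- `x_{ij}` as a total function (junk value `0` when `i = j`). -/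
noncomputable def xe (i j : Fin n) : Iu n K := if h : i ≠ j then xE n K i j h else 0

/-- The length `λ(i,j)`: equals `j - i` if `i < j`, and `n - (i - j)` if `i > j`. -/
def lam (n : ℕ) (i j : Fin n) : ℕ := (j - i : Fin n).val

/-- The bracket of `Iuₙ` on basis elements:
`[x_{ij}, x_{kl}] = δ_{jk} x_{il} - δ_{li} x_{kj}` if `λ(i,j) + λ(k,l) < n` and `0` otherwise
(unless both `j = k` and `l = i`); `[x_{ij}, x_{ji}] = ½(b_i - b_j)`;
`[a_i, x_{jk}] = (δ_{ij} - δ_{ik}) x_{jk}`; `[b_i, x_{jk}] = 0`;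
`[a_i, a_j] = [b_i, b_j] = [a_i, b_j] = 0`; extended antisymmetrically. -/
noncomputable def bb : IuIdx n → IuIdx n → Iu n K
  | Sum.inl ⟨(i, j), _⟩, Sum.inl ⟨(k, l), _⟩ =>
      if k = j ∧ l = i then ((2 : K)⁻¹) • (bE n K i - bE n K j)
      else if lam n i j + lam n k l < n then
        (if j = k then xe n K i l else 0) - (if l = i then xe n K k j else 0)
      else 0
  | Sum.inr (Sum.inl i), Sum.inl ⟨(j, k), _⟩ =>
      (((if i = j then 1 else 0) : K) - ((if i = k then 1 else 0) : K)) • xe n K j k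
  | Sum.inl ⟨(j, k), _⟩, Sum.inr (Sum.inl i) =>
      -((((if i = j then 1 else 0) : K) - ((if i = k then 1 else 0) : K)) • xe n K j k)
  | _, _ => 0

/-- The bilinear bracket of `Iuₙ`, extended bilinearly from its values on basis elements. -/
noncomputable def br : Iu n K →ₗ[K] Iu n K →ₗ[K] Iu n K :=
  Finsupp.lift (Iu n K →ₗ[K] Iu n K) K (IuIdx n) fun s =>
    Finsupp.lift (Iu n K) K (IuIdx n) fun t => bb n K s t

/-- The span of all brackets of elements of `S` with elements of `T`. -/
noncomputable def bracketSpan (S T : Submodule K (Iu n K)) : Submodule K (Iu n K) :=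
  Submodule.span K {w | ∃ u ∈ S, ∃ v ∈ T, w = br n K u v}

/-- The subspace of `Iuₙ` spanned by `{x_{ij} : i ≠ j} ∪ {b_i}`. -/
noncomputable def nilPart : Submodule K (Iu n K) :=
  Submodule.span K
    ({v | ∃ (i j : Fin n) (h : i ≠ j), v = xE n K i j h} ∪
      {v | ∃ i : Fin n, v = bE n K i})

/-- The lower central series of a subspace `N`: `C 0 = N`, `C (k+1) = [N, C k]`. -/
noncomputable def lcs (N : Submodule K (Iu n K)) : ℕ → Submodule K (Iu n K)
  | 0 => N
  | k + 1 => bracketSpan n K N (lcs N k)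

/-!
Grade `x_{ij}` by `λ(i,j) ∈ [1, n)` and put the central elements `b_i` in every degree, so that
`F_m` is spanned by the `x_{ij}` with `λ(i,j) ≥ m` together with all `b_i`. Since `λ` is additive
along `i → j → l` whenever the sum stays below `n`, the truncated bracket gives
`[F_1, F_m] ⊆ F_{m+1}`. The span of the `x_{ij}` and `b_i` is `F_1`, and `F_n` consists of the
central `b_i` only, so the lower central series of `F_1` vanishes after `n + 1` steps. Brackets
with the `a_i` only rescale the `x_{jk}`, so the derived algebra lies in `F_1` as well.
-/

def filtrationIdx (m : ℕ) : Set (IuIdx n)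
  | .inl p => m ≤ lam n p.1.1 p.1.2
  | .inr (.inl _) => False
  | .inr (.inr _) => True

noncomputable def filtration (m : ℕ) : Submodule K (Iu n K) :=
  Finsupp.supported K K (filtrationIdx n m)

section Filtration

variable {n : ℕ} {K : Type*} [Field K]

lemma one_le_lam {i j : Fin n} (h : i ≠ j) : 1 ≤ lam n i j := by
  have : NeZero n := ⟨(Fin.pos i).ne'⟩
  exact Nat.one_le_iff_ne_zero.mpr (Fin.val_ne_zero_iff.mpr (sub_ne_zero_of_ne h.symm))

lemma lam_lt (i j : Fin n) : lam n i j < n := (j - i).isLt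

lemma lam_eq_add_of_add_lt {i j l : Fin n} (h : lam n i j + lam n j l < n) :
    lam n i l = lam n i j + lam n j l := by
  have : NeZero n := ⟨(Fin.pos i).ne'⟩
  rw [lam, show l - i = (j - i) + (l - j) by abel, Fin.val_add]
  exact Nat.mod_eq_of_lt h

lemma filtration_antitone : Antitone (filtration n K) := by
  intro m m' hm
  refine Finsupp.supported_mono ?_
  rintro (p | i | i) h
  exacts [hm.trans h, h, h]

lemma bE_mem_filtration (i : Fin n) (m : ℕ) : bE n K i ∈ filtration n K m :=
  Finsupp.single_mem_supported K 1 trivial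

lemma xe_mem_filtration {i j : Fin n} {m : ℕ} (h : i ≠ j → m ≤ lam n i j) :
    xe n K i j ∈ filtration n K m := by
  unfold xe
  split_ifs with hij
  exacts [Finsupp.single_mem_supported K 1 (h hij), zero_mem _]

lemma nilPart_eq_filtration_one : nilPart n K = filtration n K 1 := by
  apply le_antisymm
  · refine Submodule.span_le.mpr ?_
    rintro v (⟨i, j, h, rfl⟩ | ⟨i, rfl⟩)
    exacts [Finsupp.single_mem_supported K 1 (one_le_lam h), bE_mem_filtration i 1]
  · rw [filtration, Finsupp.supported_eq_span_single, Submodule.span_le]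
    rintro _ ⟨(⟨⟨i, j⟩, hij⟩ | i | i), hs, rfl⟩
    · exact Submodule.subset_span (Or.inl ⟨i, j, hij, rfl⟩)
    · exact hs.elim
    · exact Submodule.subset_span (Or.inr ⟨i, rfl⟩)

lemma bracketSpan_eq_map₂ (S T : Submodule K (Iu n K)) :
    bracketSpan n K S T = Submodule.map₂ (br n K) S T := by
  rw [bracketSpan, Submodule.map₂_eq_span_image2]
  congr 1
  ext w
  simp [Set.image2, eq_comm]

lemma br_single_single (s t : IuIdx n) :
    br n K (Finsupp.single s 1) (Finsupp.single t 1) = bb n K s t := by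
  simp [br]

lemma br_mem_of_bb_mem {A B : Set (IuIdx n)} {P : Submodule K (Iu n K)}
    (h : ∀ s ∈ A, ∀ t ∈ B, bb n K s t ∈ P) {u v : Iu n K}
    (hu : u ∈ Finsupp.supported K K A) (hv : v ∈ Finsupp.supported K K B) :
    br n K u v ∈ P := by
  have hle : Submodule.map₂ (br n K) (Finsupp.supported K K A) (Finsupp.supported K K B) ≤ P := by
    rw [Finsupp.supported_eq_span_single, Finsupp.supported_eq_span_single,
      Submodule.map₂_span_span, Submodule.span_le]
    rintro _ ⟨_, ⟨s, hs, rfl⟩, _, ⟨t, ht, rfl⟩, rfl⟩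
    simpa only [SetLike.mem_coe, br_single_single] using h s hs t ht
  exact hle (Submodule.apply_mem_map₂ _ hu hv)

lemma bb_mem_filtration_one (s t : IuIdx n) : bb n K s t ∈ filtration n K 1 := by
  have hxe (i j : Fin n) : xe n K i j ∈ filtration n K 1 := xe_mem_filtration one_le_lam
  rcases s with ⟨⟨i, j⟩, hij⟩ | i | i <;> rcases t with ⟨⟨k, l⟩, hkl⟩ | k | k <;>
    simp only [bb] <;> try exact zero_mem _
  · refine ite_mem.mpr ⟨fun _ => ?_, fun _ => ite_mem.mpr ⟨fun _ => ?_, fun _ => zero_mem _⟩⟩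
    · exact Submodule.smul_mem _ _ (sub_mem (bE_mem_filtration i 1) (bE_mem_filtration j 1))
    · exact sub_mem (ite_mem.mpr ⟨fun _ => hxe i l, fun _ => zero_mem _⟩)
        (ite_mem.mpr ⟨fun _ => hxe k j, fun _ => zero_mem _⟩)
  · exact neg_mem (Submodule.smul_mem _ _ (hxe i j))
  · exact Submodule.smul_mem _ _ (hxe k l)

lemma bb_mem_filtration_succ (m : ℕ) :
    ∀ s ∈ filtrationIdx n 1, ∀ t ∈ filtrationIdx n m, bb n K s t ∈ filtration n K (m + 1) := by
  rintro (⟨⟨i, j⟩, hij⟩ | i | i) hs (⟨⟨k, l⟩, hkl⟩ | k | k) ht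
  all_goals first | exact hs.elim | exact ht.elim | (simp only [bb]; exact zero_mem _) | skip
  change 1 ≤ lam n i j at hs
  change m ≤ lam n k l at ht
  simp only [bb]
  refine ite_mem.mpr ⟨fun _ => ?_, fun _ => ite_mem.mpr ⟨fun hlt => ?_, fun _ => zero_mem _⟩⟩
  · exact Submodule.smul_mem _ _ (sub_mem (bE_mem_filtration i _) (bE_mem_filtration j _))
  refine sub_mem (ite_mem.mpr ⟨fun hjk => ?_, fun _ => zero_mem _⟩)
    (ite_mem.mpr ⟨fun hli => ?_, fun _ => zero_mem _⟩)
  · subst hjk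
    exact xe_mem_filtration fun _ => by rw [lam_eq_add_of_add_lt hlt]; omega
  · subst hli
    have hlt' : lam n k l + lam n l j < n := by omega
    exact xe_mem_filtration fun _ => by rw [lam_eq_add_of_add_lt hlt']; omega

lemma br_mem_filtration_succ {m : ℕ} {u v : Iu n K} (hu : u ∈ filtration n K 1)
    (hv : v ∈ filtration n K m) : br n K u v ∈ filtration n K (m + 1) :=
  br_mem_of_bb_mem (bb_mem_filtration_succ m) hu hv

lemma br_eq_zero_of_mem_filtration {m : ℕ} (hm : n ≤ m) (u : Iu n K) {v : Iu n K}
    (hv : v ∈ filtration n K m) : br n K u v = 0 := by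
  have hbb : ∀ s ∈ Set.univ, ∀ t ∈ filtrationIdx n m, bb n K s t ∈ (⊥ : Submodule K (Iu n K)) := by
    rintro s - (⟨⟨k, l⟩, hkl⟩ | k | k) ht
    · exact absurd (hm.trans ht) (lam_lt k l).not_ge
    · exact ht.elim
    · rcases s with ⟨⟨i, j⟩, hij⟩ | i | i <;> simp [bb]
  have hu : u ∈ Finsupp.supported K K (Set.univ : Set (IuIdx n)) := by
    simp [Finsupp.supported_univ]
  exact (Submodule.mem_bot K).mp (br_mem_of_bb_mem hbb hu hv)

lemma lcs_nilPart_le_filtration (k : ℕ) : lcs n K (nilPart n K) k ≤ filtration n K (k + 1) := by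
  induction k with
  | zero => exact nilPart_eq_filtration_one.le
  | succ k ih =>
    rw [lcs, bracketSpan_eq_map₂, Submodule.map₂_le]
    exact fun u hu v hv => br_mem_filtration_succ (nilPart_eq_filtration_one.le hu) (ih hv)

lemma lcs_nilPart_eq_bot : lcs n K (nilPart n K) (n + 1) = ⊥ := by
  rw [lcs, bracketSpan_eq_map₂, eq_bot_iff, Submodule.map₂_le]
  intro u _ v hv
  rw [br_eq_zero_of_mem_filtration n.le_succ u (lcs_nilPart_le_filtration n hv)]
  exact zero_mem _

lemma lcs_mono {M N : Submodule K (Iu n K)} (h : M ≤ N) (k : ℕ) : lcs n K M k ≤ lcs n K N k := by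
  induction k with
  | zero => exact h
  | succ k ih =>
    rw [lcs, lcs, bracketSpan_eq_map₂, bracketSpan_eq_map₂]
    exact Submodule.map₂_le_map₂ h ih

lemma bracketSpan_top_top_le_nilPart : bracketSpan n K ⊤ ⊤ ≤ nilPart n K := by
  rw [bracketSpan_eq_map₂, Submodule.map₂_le, nilPart_eq_filtration_one]
  intro u _ v _
  refine br_mem_of_bb_mem (A := Set.univ) (B := Set.univ) (fun s _ t _ => bb_mem_filtration_one s t)
    ?_ ?_ <;> simp [Finsupp.supported_univ]

end Filtration

theorem stmt13_general (n : ℕ) (K : Type*) [Field K] :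
    (∀ u ∈ nilPart n K, ∀ v ∈ nilPart n K, br n K u v ∈ nilPart n K) ∧
    (∃ k : ℕ, lcs n K (nilPart n K) k = ⊥) ∧
    (∃ k : ℕ, lcs n K (bracketSpan n K ⊤ ⊤) k = ⊥) := by
  refine ⟨fun u hu v hv => ?_, ⟨n + 1, lcs_nilPart_eq_bot⟩, ⟨n + 1, eq_bot_iff.mpr ?_⟩⟩
  · rw [nilPart_eq_filtration_one] at hu hv ⊢
    exact filtration_antitone (by norm_num) (br_mem_filtration_succ hu hv)
  · exact (lcs_mono bracketSpan_top_top_le_nilPart _).trans lcs_nilPart_eq_bot.le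

/-- the span of `{x_{ij}} ∪ {b_i}` is a Lie subalgebra of `Iuₙ` and is
nilpotent; in particular, the derived subalgebra `[Iuₙ, Iuₙ]` is a nilpotent Lie algebra. -/
theorem stmt13 (n : ℕ) (hn : 2 ≤ n) (K : Type*) [Field K] (hK : (2 : K) ≠ 0) :
    (∀ u ∈ nilPart n K, ∀ v ∈ nilPart n K, br n K u v ∈ nilPart n K) ∧
    (∃ k : ℕ, lcs n K (nilPart n K) k = ⊥) ∧
    (∃ k : ℕ, lcs n K (bracketSpan n K ⊤ ⊤) k = ⊥) :=
  stmt13_general n K
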